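/- arXiv:0904.1717 — 2 statements merged into one kernel-verified Lean document; each statement's English description precedes it below -/
import Mathlib

section
/- Let O be a noetherian object of C and q_i : O → M_i (i = 1, …, n) epimorphisms. For each simple object P of C, precomposition with q_i is an injective k-linear map Hom_C(M_i, P) → Hom_C(O, P); let V_i(P) denote its image. Suppose that for every simple object P of C the k-subspaces V_1(P), …, V_n(P) of Hom_C(O, P) are linearly independent, i.e. for each i, V_i(P) ∩ (Σ_{j≠i} V_j(P)) = 0. Then the induced morphism O → M_1 ⊕ ⋯ ⊕ M_n is an epimorphism. -/
/-!
If the cokernel `Q` of `O ⟶ ⨁ M` were nonzero, a simple quotient `σ : Q ⟶ P` would give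
morphisms `fᵢ : Mᵢ ⟶ P` with `∑ qᵢ ≫ fᵢ = 0`; independence of the subspaces forces every
`qᵢ ≫ fᵢ = 0`, hence `fᵢ = 0` since `qᵢ` is epi, hence `σ = 0`. A simple quotient exists because
`Q` is noetherian: by induction on `n` the first `n` components already map onto their biproduct,
so `Q` is a quotient of the last `Mᵢ`, hence of `O`. Noetherian objects of an abelian category
are the artinian objects of its opposite, which turns simple subobjects of artinian objects
into simple quotients of noetherian ones.
-/

open CategoryTheory CategoryTheory.Limits Opposite

namespace CategoryTheory.Limits

variable {C : Type*} [Category C] [Preadditive C]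

theorem biproduct.lift_comp_eq_sum {J : Type} [Fintype J] {f : J → C} [HasBiproduct f]
    {W Z : C} (g : ∀ j, W ⟶ f j) (u : ⨁ f ⟶ Z) :
    biproduct.lift g ≫ u = ∑ j, g j ≫ biproduct.ι f j ≫ u := by
  rw [biproduct.lift_eq, Preadditive.sum_comp]
  simp only [Category.assoc]

theorem biproduct.eq_zero_of_lift_comp_eq_zero_of_iSupIndep {R : Type*} [Ring R] [Linear R C]
    {J : Type} [Fintype J] {O : C} {M : J → C} [HasBiproduct M]
    (q : ∀ j, O ⟶ M j) [∀ j, Epi (q j)] {P : C}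
    (hindep : iSupIndep fun j => LinearMap.range (Linear.leftComp R P (q j)))
    {g : ⨁ M ⟶ P} (hg : biproduct.lift q ≫ g = 0) : g = 0 := by
  rw [biproduct.lift_comp_eq_sum] at hg
  have hcomp : ∀ j, q j ≫ biproduct.ι M j ≫ g = 0 := fun j =>
    (iSupIndep_iff_finsetSum_eq_zero_imp_eq_zero _).1 hindep Finset.univ _
      (fun j _ => ⟨biproduct.ι M j ≫ g, rfl⟩) hg j (Finset.mem_univ j)
  exact biproduct.hom_ext' _ _ fun j => by
    rw [comp_zero]
    exact (cancel_epi (q j)).1 (by rw [hcomp, comp_zero])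

theorem biproduct.eq_zero_of_lift_comp_eq_zero_of_ι_last_comp_eq_zero [HasFiniteBiproducts C]
    {n : ℕ} {O : C} {M : Fin (n + 1) → C} (q : ∀ j, O ⟶ M j)
    [Epi (biproduct.lift fun j : Fin n => q j.castSucc)] {Z : C} {g : ⨁ M ⟶ Z}
    (hg : biproduct.lift q ≫ g = 0) (hlast : biproduct.ι M (Fin.last n) ≫ g = 0) : g = 0 := by
  set g' : ⨁ (fun j : Fin n => M j.castSucc) ⟶ Z :=
    biproduct.desc fun j => biproduct.ι M j.castSucc ≫ g
  have hg' : g' = 0 := by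
    refine (cancel_epi (biproduct.lift fun j : Fin n => q j.castSucc)).1 ?_
    rw [comp_zero, biproduct.lift_desc, ← hg, biproduct.lift_comp_eq_sum, Fin.sum_univ_castSucc,
      hlast, comp_zero, add_zero]
  refine biproduct.hom_ext' _ _ fun j => ?_
  induction j using Fin.lastCases with
  | last => rw [hlast, comp_zero]
  | cast j =>
    calc biproduct.ι M j.castSucc ≫ g = biproduct.ι _ j ≫ g' :=
          (biproduct.ι_desc (fun j : Fin n => biproduct.ι M j.castSucc ≫ g) j).symm
      _ = biproduct.ι M j.castSucc ≫ 0 := by rw [hg', comp_zero, comp_zero]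

end CategoryTheory.Limits

namespace CategoryTheory.Abelian

attribute [local instance] hasFiniteBiproducts

variable {C : Type*} [Category C] [Abelian C]

theorem isArtinianObject_op_iff (X : C) : IsArtinianObject (op X) ↔ IsNoetherianObject X := by
  rw [IsArtinianObject, IsNoetherianObject, isArtinianObject.is_iff, isNoetherianObject.is_iff]
  change WellFoundedLT (Subobject (op X)) ↔ WellFoundedGT (Subobject X)
  rw [← wellFoundedGT_dual_iff]
  exact ⟨fun _ => (subobjectIsoSubobjectOp X).strictMono.wellFoundedGT,
    fun _ => (subobjectIsoSubobjectOp X).symm.strictMono.wellFoundedGT⟩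

theorem isNoetherianObject_of_epi {X Y : C} (e : X ⟶ Y) [Epi e] [IsNoetherianObject X] :
    IsNoetherianObject Y := by
  have := (isArtinianObject_op_iff X).2 inferInstance
  exact (isArtinianObject_op_iff Y).1 (isArtinianObject_of_mono e.op)

theorem simple_unop (Y : Cᵒᵖ) [Simple Y] : Simple (unop Y) := by
  rw [simple_iff_subobject_isSimpleOrder] at *
  exact (subobjectIsoSubobjectOp (unop Y)).isSimpleOrder

theorem exists_epi_to_simple_of_isNoetherianObject {X : C} [IsNoetherianObject X]
    (hX : ¬IsZero X) : ∃ (P : C) (π : X ⟶ P), Epi π ∧ Simple P := by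
  have := (isArtinianObject_op_iff X).2 inferInstance
  obtain ⟨Y, hY⟩ := exists_simple_subobject (X := op X) fun h => hX h.unop
  exact ⟨unop (Y : Cᵒᵖ), Y.arrow.unop, inferInstance, simple_unop _⟩

theorem epi_biproduct_lift_of_iSupIndep {R : Type*} [Ring R] [Linear R C] {O : C}
    [IsNoetherianObject O] {n : ℕ} {M : Fin n → C} (q : ∀ j, O ⟶ M j) [∀ j, Epi (q j)]
    (hindep : ∀ P : C, Simple P → iSupIndep fun j => LinearMap.range (Linear.leftComp R P (q j))) :
    Epi (biproduct.lift q) := by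
  induction n with
  | zero => exact ⟨fun g h _ => biproduct.hom_ext' g h fun j => j.elim0⟩
  | succ n ih =>
    have : Epi (biproduct.lift fun j : Fin n => q j.castSucc) :=
      ih _ fun P hP => (hindep P hP).comp (Fin.castSucc_injective n)
    have : Epi (biproduct.ι M (Fin.last n) ≫ cokernel.π (biproduct.lift q)) :=
      Preadditive.epi_of_cancel_zero _ fun t ht => (cancel_epi (cokernel.π _)).1 <| by
        rw [comp_zero]
        exact biproduct.eq_zero_of_lift_comp_eq_zero_of_ι_last_comp_eq_zero q
          (by rw [cokernel.condition_assoc, zero_comp]) (by rwa [← Category.assoc])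
    have : IsNoetherianObject (cokernel (biproduct.lift q)) :=
      isNoetherianObject_of_epi (q (Fin.last n) ≫ biproduct.ι M _ ≫ cokernel.π _)
    refine Preadditive.epi_of_isZero_cokernel _ (by_contra fun hQ => ?_)
    obtain ⟨P, σ, _, hP⟩ := exists_epi_to_simple_of_isNoetherianObject hQ
    have hσ : σ = 0 := (cancel_epi (cokernel.π _)).1 <| by
      rw [comp_zero]
      exact biproduct.eq_zero_of_lift_comp_eq_zero_of_iSupIndep q (hindep P hP)
        (by rw [cokernel.condition_assoc, zero_comp])
    exact Simple.not_isZero P (IsZero.of_epi_eq_zero σ hσ)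

end CategoryTheory.Abelian

/-- Let `k` be a field, `C` a `k`-linear abelian category, `O` a noetherian
object of `C` and `q i : O → M i` (`i : Fin n`) epimorphisms.  For each simple object `P`,
precomposition with `q i` is an injective `k`-linear map `Hom(M i, P) → Hom(O, P)`;
let `V i P` be its image.  If for every simple `P` the subspaces `V 1 P, …, V n P` of
`Hom(O, P)` are linearly independent (i.e. `V i P ⊓ Σ_{j ≠ i} V j P = 0` for each `i`),
then the induced morphism `O → M 1 ⊕ ⋯ ⊕ M n` is an epimorphism. -/
theorem epi_into_biproduct_of_independent_simple_quotients
    {k : Type*} [Field k] {C : Type*} [Category C] [Abelian C] [Linear k C]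
    (O : C) (hO : IsNoetherianObject O)
    (n : ℕ) (M : Fin n → C) (q : ∀ i, O ⟶ M i) (hq : ∀ i, Epi (q i))
    (V : Fin n → ∀ P : C, Submodule k (O ⟶ P))
    (hV : ∀ (i : Fin n) (P : C), V i P = LinearMap.range (Linear.leftComp k P (q i)))
    (indep : ∀ P : C, Simple P → ∀ i : Fin n,
      V i P ⊓ (⨆ j ∈ ({i}ᶜ : Set (Fin n)), V j P) = ⊥) :
    (∀ (P : C), Simple P → ∀ i : Fin n,
        Function.Injective (Linear.leftComp k P (q i))) ∧
      (haveI : HasFiniteBiproducts C := Abelian.hasFiniteBiproducts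
       Epi (biproduct.lift q)) := by
  obtain rfl : V = fun i P => LinearMap.range (Linear.leftComp k P (q i)) :=
    funext fun i => funext (hV i)
  refine ⟨fun P _ i _ _ h => (cancel_epi (q i)).1 h, ?_⟩
  exact Abelian.epi_biproduct_lift_of_iSupIndep q fun P hP =>
    iSupIndep_def.2 fun i => disjoint_iff.2 (indep P hP i)
end

section
/- Let M be a (B ⊗_k R)-module that is flat as an R-module, and let F be an exact functor from the category of left B-modules to itself that commutes with arbitrary direct sums. Then F(M) (where M is regarded as a B-module), equipped with the R-module structure induced by applying F to the action map, i.e. by the ring homomorphism R → End_B(M) → End_B(F(M)), is flat as an R-module. -/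
/-!
By the equational criterion, an `R`-module `N` is flat iff for every `f : Fin l → R` the sequence
`⨁_{a ∈ Syz f} N → N^l → N`, `(y_a) ↦ (∑_a a_i y_a)_i`, `x ↦ ∑ f_i x_i`, is exact. When `R` acts
through `B`-linear endomorphisms, this is a sequence of `B`-modules. Applying `F` to the sequence
for `M` gives an exact sequence, and since `F` commutes with finite products and direct sums, the
comparison maps relate it to the sequence for `F(M)`: a surjection `⨁ F(M) → F(⨁ M)` on the left
and a split injection `F(M)^l → F(M^l)` in the middle, which is enough to transport exactness.
-/

open CategoryTheory

/-- The ring homomorphism `End_B(M) →+* End_B(F M)` induced by an additive functor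
`F : ModuleCat B ⥤ ModuleCat B`. -/
noncomputable def inducedEndRingHom (B : Type u) [Ring B]
    (F : ModuleCat.{u} B ⥤ ModuleCat.{u} B) [F.Additive]
    (M : Type u) [AddCommGroup M] [Module B M] :
    Module.End B M →+* Module.End B ↥(F.obj (ModuleCat.of B M)) where
  toFun φ := (F.map (X := ModuleCat.of B M) (Y := ModuleCat.of B M) (ModuleCat.ofHom φ)).hom
  map_one' := by
    rw [show ModuleCat.ofHom (1 : Module.End B M) = 𝟙 (ModuleCat.of B M) from rfl, F.map_id]; rfl
  map_mul' φ ψ := by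
    rw [show ModuleCat.ofHom (φ * ψ) = ModuleCat.ofHom ψ ≫ ModuleCat.ofHom φ from rfl,
      F.map_comp]; rfl
  map_zero' := by
    rw [show ModuleCat.ofHom (0 : Module.End B M) = 0 from rfl, F.map_zero]; rfl
  map_add' φ ψ := by
    rw [show ModuleCat.ofHom (φ + ψ) = ModuleCat.ofHom φ + ModuleCat.ofHom ψ from rfl,
      F.map_add]; rfl

universe u

open DirectSum

section Syzygy

variable {B : Type*} [Ring B] {R : Type*} [CommRing R]
  {N : Type*} [AddCommGroup N] [Module B N]

abbrev Syzygy {l : ℕ} (f : Fin l → R) : Type _ := {a : Fin l → R // ∑ i, f i * a i = 0}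

def relationMap (ρ : R →+* Module.End B N) {l : ℕ} (f : Fin l → R) : (Fin l → N) →ₗ[B] N :=
  ∑ i, ρ (f i) ∘ₗ LinearMap.proj i

theorem relationMap_apply (ρ : R →+* Module.End B N) {l : ℕ} (f : Fin l → R) (x : Fin l → N) :
    relationMap ρ f x = ∑ i, ρ (f i) (x i) := by
  simp [relationMap]

variable [DecidableEq R]

noncomputable def syzygyMap (ρ : R →+* Module.End B N) {l : ℕ} (f : Fin l → R) :
    (⨁ _ : Syzygy f, N) →ₗ[B] (Fin l → N) :=
  toModule B _ _ fun a => LinearMap.pi fun i => ρ (a.1 i)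

variable (ρ : R →+* Module.End B N) {l : ℕ} (f : Fin l → R)

theorem syzygyMap_lof (a : Syzygy f) (y : N) :
    syzygyMap ρ f (lof B _ (fun _ => N) a y) = fun i => ρ (a.1 i) y :=
  toModule_lof B (M := fun _ : Syzygy f => N) a y

theorem isTrivialRelation_iff_mem_range_syzygyMap (x : Fin l → N) :
    letI := Module.compHom N ρ
    Module.IsTrivialRelation f x ↔ x ∈ Set.range (syzygyMap ρ f) := by
  let := Module.compHom N ρ
  constructor
  · rintro ⟨k, a, y, hx, ha⟩
    refine ⟨∑ j, lof B _ (fun _ => N) ⟨fun i => a i j, ha j⟩ (y j), funext fun i => ?_⟩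
    simp only [map_sum, syzygyMap_lof, Finset.sum_apply, hx i]
    rfl
  · classical
    rintro ⟨d, rfl⟩
    let e := d.support.equivFin.symm
    refine ⟨d.support.card, fun i j => (e j : Syzygy f).1 i, fun j => d (e j), fun i => ?_,
      fun j => (e j : Syzygy f).2⟩
    conv_lhs => rw [← sum_support_of d]
    simp only [map_sum, ← lof_eq_of B, syzygyMap_lof, Finset.sum_apply]
    exact (Finset.sum_coe_sort d.support _).symm.trans (e.sum_comp _).symm

theorem flat_iff_forall_exact_syzygyMap_relationMap :
    (letI := Module.compHom N ρ; Module.Flat R N) ↔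
      ∀ (l : ℕ) (f : Fin l → R), Function.Exact (syzygyMap ρ f) (relationMap ρ f) := by
  let := Module.compHom N ρ
  have relationMap_eq (l : ℕ) (f : Fin l → R) (x : Fin l → N) :
      relationMap ρ f x = ∑ i, f i • x i :=
    relationMap_apply ρ f x
  rw [Module.Flat.iff_forall_isTrivialRelation]
  refine ⟨fun h l f x => ?_, fun h l f x hx => ?_⟩
  · rw [relationMap_eq, ← isTrivialRelation_iff_mem_range_syzygyMap]
    exact ⟨h, Module.sum_smul_eq_zero_of_isTrivialRelation⟩
  · exact (isTrivialRelation_iff_mem_range_syzygyMap ρ f x).2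
      ((h l f x).1 (by rwa [relationMap_eq]))

end Syzygy

open ModuleCat Limits

theorem Function.Exact.of_ladder_surjective_of_leftInverse {A B C A' B' : Type*} [Zero C]
    {f : A → B} {g : B → C} {f' : A' → B'} {g' : B' → C} {ψ : A' → A} {σ : B' → B}
    {τ : B → B'} (h : Function.Exact f g) (hψ : Function.Surjective ψ)
    (hτσ : Function.LeftInverse τ σ) (hf : f ∘ ψ = σ ∘ f') (hg : g ∘ σ = g') :
    Function.Exact f' g' := by
  intro y
  subst hg
  constructor
  · intro hy
    obtain ⟨a, ha⟩ := (h (σ y)).1 hy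
    obtain ⟨a', rfl⟩ := hψ a
    refine ⟨a', ?_⟩
    rw [← hτσ y, ← ha, ← hτσ (f' a')]
    exact congrArg τ (congrFun hf a').symm
  · rintro ⟨a', rfl⟩
    exact (h _).2 ⟨ψ a', congrFun hf a'⟩

section Functor

variable {B : Type u} [Ring B]

theorem Function.Exact.moduleCat_functor_map {C : Type*} [Ring C]
    (F : ModuleCat.{u} B ⥤ ModuleCat.{u} C) [F.PreservesZeroMorphisms]
    [PreservesFiniteLimits F] [PreservesFiniteColimits F]
    {X Y Z : Type u} [AddCommGroup X] [Module B X] [AddCommGroup Y] [Module B Y]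
    [AddCommGroup Z] [Module B Z] {f : X →ₗ[B] Y} {g : Y →ₗ[B] Z} (h : Function.Exact f g) :
    Function.Exact (F.map (ofHom f)).hom (F.map (ofHom g)).hom := by
  let S := ShortComplex.moduleCatMk f g h.linearMap_comp_eq_zero
  have hS : S.Exact := (ShortComplex.ShortExact.moduleCat_exact_iff_function_exact S).2 h
  exact (ShortComplex.ShortExact.moduleCat_exact_iff_function_exact (S.map F)).1 (hS.map F)

variable (F : ModuleCat.{u} B ⥤ ModuleCat.{u} B)

theorem map_ofHom_apply_map_ofHom {X Y Z : Type u} [AddCommGroup X] [Module B X]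
    [AddCommGroup Y] [Module B Y] [AddCommGroup Z] [Module B Z]
    (f : X →ₗ[B] Y) (g : Y →ₗ[B] Z) (t : F.obj (of B X)) :
    (F.map (ofHom g)).hom ((F.map (ofHom f)).hom t) = (F.map (ofHom (g ∘ₗ f))).hom t := by
  rw [ofHom_comp, F.map_comp]
  rfl

theorem map_ofHom_sum_apply {X Y : Type u} [AddCommGroup X] [Module B X]
    [AddCommGroup Y] [Module B Y] [F.Additive] {α : Type*} (s : Finset α) (g : α → X →ₗ[B] Y)
    (t : F.obj (of B X)) :
    (F.map (ofHom (∑ a ∈ s, g a))).hom t = ∑ a ∈ s, (F.map (ofHom (g a))).hom t := by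
  have : ofHom (∑ a ∈ s, g a) = ∑ a ∈ s, ofHom (g a) := by
    ext1
    simp only [hom_ofHom, hom_sum]
  rw [this, F.map_sum, hom_sum, LinearMap.sum_apply]

section DirectSum

variable {J : Type u} [DecidableEq J] (M : J → Type u) [∀ j, AddCommGroup (M j)]
  [∀ j, Module B (M j)]

noncomputable def directSumComparison :
    (⨁ j, F.obj (of B (M j))) →ₗ[B] F.obj (of B (⨁ j, M j)) :=
  toModule B J _ fun j => (F.map (ofHom (lof B J M j))).hom

theorem directSumComparison_lof (j : J) (t : F.obj (of B (M j))) :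
    directSumComparison F M (lof B J _ j t) = (F.map (ofHom (lof B J M j))).hom t :=
  toModule_lof B (M := fun j => F.obj (of B (M j))) j t

theorem bijective_directSumComparison [PreservesColimitsOfShape (Discrete J) F] :
    Function.Bijective (directSumComparison F M) := by
  let Z : J → ModuleCat.{u} B := fun j => of B (M j)
  have hF := isColimitCofanMkObjOfIsColimit F Z _ (coproductCoconeIsColimit Z)
  exact ConcreteCategory.bijective_of_isIso
    (IsColimit.coconePointUniqueUpToIso (coproductCoconeIsColimit (fun j => F.obj (Z j))) hF).hom

end DirectSum

section Pi

variable {ι : Type} [Fintype ι] [DecidableEq ι] (M : ι → Type u) [∀ i, AddCommGroup (M i)]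
  [∀ i, Module B (M i)]

noncomputable def piToMapPi : (∀ i, F.obj (of B (M i))) →ₗ[B] F.obj (of B (∀ i, M i)) :=
  ∑ i, (F.map (ofHom (LinearMap.single B M i))).hom ∘ₗ LinearMap.proj i

noncomputable def mapPiToPi : F.obj (of B (∀ i, M i)) →ₗ[B] (∀ i, F.obj (of B (M i))) :=
  LinearMap.pi fun i => (F.map (ofHom (LinearMap.proj i))).hom

theorem map_piToMapPi {Y : Type u} [AddCommGroup Y] [Module B Y] (φ : (∀ i, M i) →ₗ[B] Y)
    (x : ∀ i, F.obj (of B (M i))) :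
    (F.map (ofHom φ)).hom (piToMapPi F M x) =
      ∑ i, (F.map (ofHom (φ ∘ₗ LinearMap.single B M i))).hom (x i) := by
  simp only [piToMapPi, LinearMap.sum_apply, LinearMap.comp_apply, LinearMap.proj_apply, map_sum,
    map_ofHom_apply_map_ofHom]

variable [F.Additive]

theorem piToMapPi_map_proj_comp {Y : Type u} [AddCommGroup Y] [Module B Y]
    (φ : Y →ₗ[B] (∀ i, M i)) (t : F.obj (of B Y)) :
    piToMapPi F M (fun i => (F.map (ofHom (LinearMap.proj i ∘ₗ φ))).hom t) =
      (F.map (ofHom φ)).hom t := by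
  have hφ : φ = ∑ i, LinearMap.single B M i ∘ₗ LinearMap.proj i ∘ₗ φ :=
    LinearMap.ext fun y => by simp [Finset.univ_sum_single]
  conv_rhs => rw [hφ, map_ofHom_sum_apply]
  simp only [piToMapPi, LinearMap.sum_apply, LinearMap.comp_apply, LinearMap.proj_apply,
    map_ofHom_apply_map_ofHom]

theorem leftInverse_mapPiToPi_piToMapPi :
    Function.LeftInverse (mapPiToPi F M) (piToMapPi F M) := by
  intro x
  funext i
  rw [mapPiToPi, LinearMap.pi_apply, map_piToMapPi, Finset.sum_eq_single i]
  · rw [LinearMap.proj_comp_single_same, ofHom_id, F.map_id]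
    rfl
  · intro j _ hji
    rw [LinearMap.proj_comp_single_ne B M i j hji.symm, ofHom_zero, F.map_zero]
    rfl
  · simp

end Pi

end Functor

section Transfer

variable {B : Type u} [Ring B] {R : Type u} [CommRing R]
  (F : ModuleCat.{u} B ⥤ ModuleCat.{u} B) [F.Additive]
  {M : Type u} [AddCommGroup M] [Module B M] (ρ : R →+* Module.End B M) {l : ℕ} (f : Fin l → R)

theorem map_relationMap_comp_piToMapPi :
    (F.map (ofHom (relationMap ρ f))).hom ∘ₗ piToMapPi F (fun _ : Fin l => M) =
      relationMap ((inducedEndRingHom B F M).comp ρ) f := by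
  have comp_single (i : Fin l) : relationMap ρ f ∘ₗ LinearMap.single B _ i = ρ (f i) :=
    LinearMap.ext fun y => by simp [relationMap_apply, Pi.single_apply, apply_ite]
  ext x
  simp only [LinearMap.comp_apply, map_piToMapPi, comp_single, relationMap_apply]
  rfl

variable [DecidableEq R]

theorem map_syzygyMap_comp_directSumComparison :
    (F.map (ofHom (syzygyMap ρ f))).hom ∘ₗ directSumComparison F (fun _ : Syzygy f => M) =
      piToMapPi F (fun _ : Fin l => M) ∘ₗ syzygyMap ((inducedEndRingHom B F M).comp ρ) f := by
  refine linearMap_ext _ fun a => LinearMap.ext fun t => ?_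
  have proj_comp (i : Fin l) :
      (LinearMap.proj i ∘ₗ syzygyMap ρ f) ∘ₗ lof B _ (fun _ => M) a = ρ (a.1 i) :=
    LinearMap.ext fun y => by simp [syzygyMap_lof]
  simp only [LinearMap.comp_apply, directSumComparison_lof, map_ofHom_apply_map_ofHom,
    syzygyMap_lof, ← piToMapPi_map_proj_comp F (fun _ : Fin l => M), proj_comp]
  rfl

theorem Function.Exact.syzygyMap_relationMap_map [PreservesFiniteLimits F]
    [PreservesFiniteColimits F] [PreservesColimitsOfShape (Discrete (Syzygy f)) F]
    (h : Function.Exact (syzygyMap ρ f) (relationMap ρ f)) :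
    Function.Exact (syzygyMap ((inducedEndRingHom B F M).comp ρ) f)
      (relationMap ((inducedEndRingHom B F M).comp ρ) f) :=
  (h.moduleCat_functor_map F).of_ladder_surjective_of_leftInverse
    (bijective_directSumComparison F _).2 (leftInverse_mapPiToPi_piToMapPi F _)
    (congrArg DFunLike.coe (map_syzygyMap_comp_directSumComparison F ρ f))
    (congrArg DFunLike.coe (map_relationMap_comp_piToMapPi F ρ f))

end Transfer

/-- Let `k` be a field, `B` an associative unital `k`-algebra and `R` a
commutative `k`-algebra.  Let `M` be a `B`-module together with a `k`-algebra homomorphism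
`ρ : R → End_B(M)` (i.e. a `(B ⊗_k R)`-module) which is flat as an `R`-module, and let
`F` be an exact endofunctor of the category of `B`-modules commuting with arbitrary
direct sums.  Then `F(M)`, with the `R`-module structure given by the ring homomorphism
`R → End_B(M) → End_B(F(M))`, is flat as an `R`-module. -/
theorem flat_of_exact_coproductPreserving_functor
    (k : Type u) [Field k] (B : Type u) [Ring B] [Algebra k B]
    (R : Type u) [CommRing R] [Algebra k R]
    (M : Type u) [AddCommGroup M] [Module B M] [Module k M] [SMulCommClass B k M] [IsScalarTower k B M]
    (ρ : R →ₐ[k] Module.End B M)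
    (hflat : letI : Module R M := Module.compHom M ρ.toRingHom; Module.Flat R M)
    (F : ModuleCat.{u} B ⥤ ModuleCat.{u} B) [F.Additive]
    [Limits.PreservesFiniteLimits F] [Limits.PreservesFiniteColimits F]
    (hsums : ∀ ι : Type u, Limits.PreservesColimitsOfShape (Discrete ι) F) :
    letI : Module R ↥(F.obj (ModuleCat.of B M)) :=
      Module.compHom _ ((inducedEndRingHom B F M).comp ρ.toRingHom)
    Module.Flat R ↥(F.obj (ModuleCat.of B M)) := by
  classical
  rw [flat_iff_forall_exact_syzygyMap_relationMap] at hflat ⊢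
  intro l f
  have := hsums (Syzygy f)
  exact (hflat l f).syzygyMap_relationMap_map F ρ.toRingHom f
end
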